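/- arXiv:math/0301026 — 2 statements merged into one kernel-verified Lean document; each statement's English description precedes it below -/
import Mathlib

section
/- Let g ≥ 1, let σ be a nonzero even integer with |σ| ≤ 2g and g + σ/2 odd, and let t : ℕ → ℤ satisfy (−1)^{i + σ/2} · (t(i) − δ(σ, i)) ≤ 0 for all i ≥ 0, where δ(m,i) = max(0, ⌈(|m| − 2|i|)/4⌉). If t(g−1) ≠ 0, then t(g−1) < 0 and t(|σ|/2 − 1) ≥ 1. In particular, the sequence t has both a strictly positive and a strictly negative value. -/
/-- Abstracted proof of Corollary 1.3: if `g ≥ 1`, `σ` is a nonzero even integer with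
`|σ| ≤ 2g` and `g + σ/2` odd, and the torsion coefficients `t` satisfy the alternating
bound `(-1)^{i + σ/2} (t i - δ(σ,i)) ≤ 0` with `δ(m,i) = max(0, ⌈(|m|-2|i|)/4⌉)`,
then `t (g-1) ≠ 0` implies `t (g-1) < 0` and `t (|σ|/2 - 1) ≥ 1`; in particular `t`
takes both a strictly negative and a strictly positive value. -/
theorem alternating_knot_torsion_signs (g : ℕ) (σ : ℤ) (t : ℕ → ℤ)
    (hg : 1 ≤ g) (hσe : Even σ) (hσ0 : σ ≠ 0) (habs : |σ| ≤ 2 * (g : ℤ))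
    (hodd : Odd ((g : ℤ) + σ / 2))
    (hineq : ∀ i : ℕ, (-1 : ℤ) ^ (((i : ℤ) + σ / 2).natAbs) *
      (t i - max 0 ⌈((|σ| - 2 * (i : ℤ) : ℤ) : ℚ) / 4⌉) ≤ 0)
    (hne : t (g - 1) ≠ 0) :
    t (g - 1) < 0 ∧ 1 ≤ t (σ.natAbs / 2 - 1) := by
  obtain ⟨k, hk⟩ := hσe
  have hk2 : σ = 2 * k := by omega
  have hhalf : σ / 2 = k := by omega
  -- |σ| ≠ 2g, else g + σ/2 even
  have hne2g : |σ| ≠ 2 * (g : ℤ) := by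
    intro h
    rcases abs_eq (by positivity : (0:ℤ) ≤ 2 * g) |>.mp h with h' | h'
    · rcases hodd with ⟨m, hm⟩; omega
    · rcases hodd with ⟨m, hm⟩; omega
  have habs' : |σ| ≤ 2 * (g : ℤ) - 2 := by
    rcases le_or_gt σ 0 with h | h
    · rw [abs_of_nonpos h] at *; omega
    · rw [abs_of_pos h] at *; omega
  constructor
  · -- i = g - 1
    have h := hineq (g - 1)
    have hc : ((g - 1 : ℕ) : ℤ) = (g : ℤ) - 1 := by
      have : (1:ℕ) ≤ g := hg; push_cast [this]; ring
    rw [hc] at h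
    have heven : Even (((g : ℤ) - 1 + σ / 2).natAbs) := by
      rw [Int.natAbs_even]
      rcases hodd with ⟨m, hm⟩
      exact ⟨(g : ℤ) + σ/2 - m - 1, by omega⟩
    rw [heven.neg_one_pow, one_mul] at h
    have hceil : ⌈((|σ| - 2 * ((g:ℤ) - 1) : ℤ) : ℚ) / 4⌉ ≤ 0 := by
      rw [Int.ceil_le]
      have h0 : |σ| - 2 * ((g:ℤ) - 1) ≤ 0 := by omega
      have : ((|σ| - 2 * ((g:ℤ) - 1) : ℤ) : ℚ) ≤ 0 := by exact_mod_cast h0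
      push_cast at this ⊢
      linarith
    have hmax : max (0:ℤ) ⌈((|σ| - 2 * ((g:ℤ) - 1) : ℤ) : ℚ) / 4⌉ = 0 :=
      max_eq_left hceil
    rw [hmax] at h
    omega
  · -- i = σ.natAbs / 2 - 1
    set s : ℕ := σ.natAbs / 2 with hs
    have hdvd : 2 ∣ σ.natAbs := (Int.natAbs_even.mpr ⟨k, hk⟩).two_dvd
    have hs1 : 1 ≤ s := by
      have : σ.natAbs ≠ 0 := Int.natAbs_ne_zero.mpr hσ0
      omega
    have hsabs : |σ| = 2 * (s : ℤ) := by
      rw [Int.abs_eq_natAbs]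
      have : σ.natAbs = 2 * s := by omega
      exact_mod_cast this
    have h := hineq (s - 1)
    have hc : ((s - 1 : ℕ) : ℤ) = (s : ℤ) - 1 := by push_cast [hs1]; ring
    rw [hc] at h
    have hkabs : k = (s:ℤ) ∨ k = -(s:ℤ) := by
      rcases abs_cases σ with ⟨h1, _⟩ | ⟨h1, _⟩
      · left; omega
      · right; omega
    have hoddexp : Odd (((s : ℤ) - 1 + σ / 2).natAbs) := by
      rw [Int.natAbs_odd, hhalf]
      rcases hkabs with h' | h'
      · exact ⟨(s:ℤ) - 1, by omega⟩
      · rw [h']; exact ⟨-1, by ring⟩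
    rw [hoddexp.neg_one_pow, neg_one_mul, neg_nonpos] at h
    have hceil : ⌈((|σ| - 2 * ((s:ℤ) - 1) : ℤ) : ℚ) / 4⌉ = 1 := by
      have : (|σ| - 2 * ((s:ℤ) - 1) : ℤ) = 2 := by omega
      rw [this]
      norm_num [Int.ceil_eq_iff]
    rw [hceil] at h
    simp at h
    omega
end

section
/- Let a : ℕ → ℤ be finitely supported, define t(i) = ∑_{j≥1} j·a(i+j) for i ≥ 0, and suppose all nonzero values of t have the same sign. If t(i₀) > 0 for some i₀, then ∑_{k≥1} k² a(k) > 0, and if t(i₀) < 0 for some i₀, then ∑_{k≥1} k² a(k) < 0. -/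
open Finset

private def wt (i : ℕ) : ℤ := if i = 0 then 1 else 2

private lemma wt_pos (i : ℕ) : 0 < wt i := by unfold wt; split <;> norm_num

private lemma wt_sum (n : ℕ) : ∑ i ∈ range (n + 1), wt i = 2 * n + 1 := by
  induction n with
  | zero => simp [wt]
  | succ n ih => rw [sum_range_succ, ih]; unfold wt; simp; ring

private lemma wt_weighted (n : ℕ) :
    ∑ i ∈ range (n + 1), wt i * ((n + 1 - i : ℕ) : ℤ) = ((n : ℤ) + 1) ^ 2 := by
  induction n with
  | zero => simp [wt]
  | succ n ih =>
    rw [sum_range_succ]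
    have h1 : ∑ i ∈ range (n + 1), wt i * ((n + 1 + 1 - i : ℕ) : ℤ)
        = ∑ i ∈ range (n + 1), (wt i * ((n + 1 - i : ℕ) : ℤ) + wt i) := by
      refine Finset.sum_congr rfl fun i hi => ?_
      have hi' : i ≤ n := by simpa [Nat.lt_succ_iff] using hi
      have : ((n + 1 + 1 - i : ℕ) : ℤ) = ((n + 1 - i : ℕ) : ℤ) + 1 := by omega
      rw [this]; ring
    rw [h1, Finset.sum_add_distrib, ih, wt_sum]
    unfold wt; simp; ring

private lemma key (a : ℕ → ℤ) (n : ℕ) :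
    ∑ k ∈ range (n + 1), (k : ℤ) ^ 2 * a k
      = ∑ i ∈ range (n + 1), wt i * ∑ j ∈ range (n + 1 - i), (j : ℤ) * a (i + j) := by
  induction n with
  | zero => simp
  | succ n ih =>
    rw [sum_range_succ]
    conv_rhs => rw [sum_range_succ]
    rw [ih]
    have h1 : ∑ i ∈ range (n + 1), wt i * ∑ j ∈ range (n + 1 + 1 - i), (j : ℤ) * a (i + j)
        = ∑ i ∈ range (n + 1), (wt i * ∑ j ∈ range (n + 1 - i), (j : ℤ) * a (i + j)
            + wt i * ((n + 1 - i : ℕ) : ℤ) * a (n + 1)) := by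
      refine Finset.sum_congr rfl fun i hi => ?_
      have hi' : i ≤ n := by simpa [Nat.lt_succ_iff] using hi
      have h2 : n + 1 + 1 - i = (n + 1 - i) + 1 := by omega
      have h3 : i + (n + 1 - i) = n + 1 := by omega
      rw [h2, sum_range_succ, h3]; ring
    rw [h1, Finset.sum_add_distrib]
    have h4 : ∑ i ∈ range (n + 1), wt i * ((n + 1 - i : ℕ) : ℤ) * a (n + 1)
        = (∑ i ∈ range (n + 1), wt i * ((n + 1 - i : ℕ) : ℤ)) * a (n + 1) := by
      rw [Finset.sum_mul]
    have h5 : n + 1 + 1 - (n + 1) = 1 := by omega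
    rw [h4, wt_weighted, h5]
    simp

/-- If all nonzero torsion coefficients have the same sign, then the existence of a
strictly positive (resp. negative) one forces `∑ k² a k > 0` (resp. `< 0`). -/
theorem torsion_sign_forces_casson_sign (a : ℕ → ℤ) (t : ℕ → ℤ)
    (hfin : ∃ N : ℕ, ∀ k > N, a k = 0)
    (ht : ∀ i : ℕ, t i = ∑ᶠ j : ℕ, (j : ℤ) * a (i + j))
    (hsame : (∀ i : ℕ, 0 ≤ t i) ∨ (∀ i : ℕ, t i ≤ 0)) :
    ((∃ i₀ : ℕ, 0 < t i₀) → 0 < ∑ᶠ k : ℕ, (k : ℤ) ^ 2 * a k) ∧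
    ((∃ i₀ : ℕ, t i₀ < 0) → (∑ᶠ k : ℕ, (k : ℤ) ^ 2 * a k) < 0) := by
  obtain ⟨N, hN⟩ := hfin
  -- t i equals a truncated finite sum
  have htR : ∀ i : ℕ, t i = ∑ j ∈ range (N + 1 - i), (j : ℤ) * a (i + j) := by
    intro i
    rw [ht i]
    have hsupp : Function.support (fun j : ℕ => (j : ℤ) * a (i + j)) ⊆ ↑(range (N + 1 - i)) := by
      intro j hj
      simp only [Function.mem_support] at hj
      simp only [coe_range, Set.mem_Iio]
      by_contra hlt
      push_neg at hlt
      rcases Nat.eq_zero_or_pos j with h0 | h0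
      · subst h0; simp at hj
      · have : a (i + j) = 0 := hN _ (by omega)
        rw [this, mul_zero] at hj; exact hj rfl
    exact finsum_eq_sum_of_support_subset _ hsupp
  -- the casson sum as finite sum
  have hC : ∑ᶠ k : ℕ, (k : ℤ) ^ 2 * a k = ∑ k ∈ range (N + 1), (k : ℤ) ^ 2 * a k := by
    refine finsum_eq_sum_of_support_subset _ ?_
    intro k hk
    simp only [Function.mem_support] at hk
    simp only [coe_range, Set.mem_Iio]
    by_contra hlt
    push_neg at hlt
    rw [hN _ (by omega), mul_zero] at hk
    exact hk rfl
  have hkey : ∑ᶠ k : ℕ, (k : ℤ) ^ 2 * a k = ∑ i ∈ range (N + 1), wt i * t i := by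
    rw [hC, key a N]
    exact Finset.sum_congr rfl fun i _ => by rw [htR i]
  -- t vanishes beyond N
  have htz : ∀ i > N, t i = 0 := by
    intro i hi
    rw [htR i]
    have : N + 1 - i = 0 := by omega
    simp [this]
  constructor
  · rintro ⟨i₀, hi₀⟩
    have hpos : ∀ i : ℕ, 0 ≤ t i := by
      rcases hsame with h | h
      · exact h
      · exact absurd (h i₀) (by omega)
    have hmem : i₀ ∈ range (N + 1) := by
      simp only [mem_range]
      by_contra h
      push_neg at h
      rw [htz i₀ (by omega)] at hi₀
      exact absurd hi₀ (lt_irrefl 0)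
    rw [hkey]
    refine Finset.sum_pos' (fun i _ => mul_nonneg (wt_pos i).le (hpos i)) ⟨i₀, hmem, ?_⟩
    exact mul_pos (wt_pos i₀) hi₀
  · rintro ⟨i₀, hi₀⟩
    have hneg : ∀ i : ℕ, t i ≤ 0 := by
      rcases hsame with h | h
      · exact absurd (h i₀) (by omega)
      · exact h
    have hmem : i₀ ∈ range (N + 1) := by
      simp only [mem_range]
      by_contra h
      push_neg at h
      rw [htz i₀ (by omega)] at hi₀
      exact absurd hi₀ (lt_irrefl 0)
    rw [hkey]
    have h0 : 0 < ∑ i ∈ range (N + 1), wt i * (-t i) := by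
      refine Finset.sum_pos' (fun i _ => mul_nonneg (wt_pos i).le (by linarith [hneg i])) ⟨i₀, hmem, ?_⟩
      exact mul_pos (wt_pos i₀) (by omega)
    have h1 : ∑ i ∈ range (N + 1), wt i * (-t i) = -∑ i ∈ range (N + 1), wt i * t i := by
      rw [← Finset.sum_neg_distrib]
      exact Finset.sum_congr rfl fun i _ => by ring
    omega
end
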